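/- arXiv:2004.03716 — 2 statements merged into one kernel-verified Lean document; each statement's English description precedes it below -/
import Mathlib

section
/- Let R be a finite binary relation over attributes (A,B) and S a finite binary relation over attributes (B,C). Suppose every A-value in R appears in at least h tuples of R (for some real h > 0), and every B-value in S appears in at most ℓ tuples of S (for some real ℓ > 0). Then the size of the join V(a,c) = ∃b. R(a,b) ∧ S(b,c), counted as the number of distinct (a,c) pairs, is at most min(|R|·ℓ, |S|·(|R|/h)). -/
/-!
Each output pair `(a, c)` arises from a tuple `(a, b) ∈ R` extended by a tuple `(b, c) ∈ S`, and
there are at most `ℓ` such extensions per tuple of `R`, giving `|R| · ℓ`. On the other hand `a`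
ranges over `π_A R`, which has at most `|R| / h` elements because each of its values accounts
for at least `h` tuples of `R`, and `c` ranges over `π_C S`, which has at most `|S|` elements.
-/

open Finset

namespace Finset

variable {α β : Type*}

theorem card_image_mul_le_card [DecidableEq β] (s : Finset α) (f : α → β) {h : ℝ}
    (hs : ∀ b ∈ s.image f, h ≤ #(s.filter (f · = b))) : (#(s.image f) : ℝ) * h ≤ #s :=
  calc (#(s.image f) : ℝ) * h = ∑ _b ∈ s.image f, h := by rw [sum_const, nsmul_eq_mul]
    _ ≤ ∑ b ∈ s.image f, (#(s.filter (f · = b)) : ℝ) := sum_le_sum hs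
    _ = #s := by exact_mod_cast (card_eq_sum_card_image f s).symm

theorem card_image_le_card_div [DecidableEq β] (s : Finset α) (f : α → β) {h : ℝ} (hh : 0 < h)
    (hs : ∀ b ∈ s.image f, h ≤ #(s.filter (f · = b))) : (#(s.image f) : ℝ) ≤ #s / h :=
  (le_div_iff₀ hh).2 (card_image_mul_le_card s f hs)

end Finset

section Join

variable {α β γ : Type*} [DecidableEq β]

/-- The tuples `((a, b), (b, c))` of the natural join `R ⋈ S`. -/
def natJoin (R : Finset (α × β)) (S : Finset (β × γ)) : Finset ((α × β) × (β × γ)) :=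
  (R ×ˢ S).filter (fun p => p.1.2 = p.2.1)

/-- The join `V(a, c) = ∃ b, R(a, b) ∧ S(b, c)`, i.e. the projection of `R ⋈ S` onto `(A, C)`. -/
def relComp [DecidableEq α] [DecidableEq γ] (R : Finset (α × β)) (S : Finset (β × γ)) :
    Finset (α × γ) :=
  (natJoin R S).image (fun p => (p.1.1, p.2.2))

theorem card_natJoin (R : Finset (α × β)) (S : Finset (β × γ)) :
    #(natJoin R S) = ∑ r ∈ R, #(S.filter (·.1 = r.2)) := by
  simp only [natJoin, card_filter, sum_product, eq_comm]

theorem card_natJoin_le_card_mul (R : Finset (α × β)) (S : Finset (β × γ)) {ℓ : ℝ} (hl : 0 ≤ ℓ)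
    (hS : ∀ b ∈ S.image Prod.fst, (#(S.filter (·.1 = b)) : ℝ) ≤ ℓ) :
    (#(natJoin R S) : ℝ) ≤ #R * ℓ := by
  have hdeg (b : β) : (#(S.filter (·.1 = b)) : ℝ) ≤ ℓ := by
    by_cases hb : b ∈ S.image Prod.fst
    · exact hS b hb
    · rw [filter_eq_empty_iff.2 fun s hs hsb => hb (mem_image.2 ⟨s, hs, hsb⟩)]
      simpa using hl
  rw [card_natJoin, Nat.cast_sum]
  simpa using sum_le_card_nsmul R _ ℓ fun r _ => hdeg r.2

variable [DecidableEq α] [DecidableEq γ]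

theorem card_relComp_le_card_mul (R : Finset (α × β)) (S : Finset (β × γ)) {ℓ : ℝ} (hl : 0 ≤ ℓ)
    (hS : ∀ b ∈ S.image Prod.fst, (#(S.filter (·.1 = b)) : ℝ) ≤ ℓ) :
    (#(relComp R S) : ℝ) ≤ #R * ℓ :=
  (Nat.cast_le.2 card_image_le).trans (card_natJoin_le_card_mul R S hl hS)

theorem relComp_subset_image_fst_product_image_snd (R : Finset (α × β)) (S : Finset (β × γ)) :
    relComp R S ⊆ R.image Prod.fst ×ˢ S.image Prod.snd := by
  intro v hv
  obtain ⟨⟨r, s⟩, hrs, rfl⟩ := mem_image.1 hv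
  obtain ⟨hr, hs⟩ := mem_product.1 (mem_filter.1 hrs).1
  exact mem_product.2 ⟨mem_image_of_mem _ hr, mem_image_of_mem _ hs⟩

theorem card_relComp_le_card_image_fst_mul (R : Finset (α × β)) (S : Finset (β × γ)) :
    #(relComp R S) ≤ #(R.image Prod.fst) * #S :=
  calc #(relComp R S) ≤ #(R.image Prod.fst) * #(S.image Prod.snd) := by
        simpa only [card_product] using card_le_card (relComp_subset_image_fst_product_image_snd R S)
    _ ≤ #(R.image Prod.fst) * #S := Nat.mul_le_mul_left _ card_image_le

end Join

/-- Size bound on the join `V(a,c) = ∃ b, R(a,b) ∧ S(b,c)` when every `A`-value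
in `R` has degree at least `h` and every `B`-value in `S` has degree at most `ℓ`. -/
theorem join_size_bound {α β γ : Type*} [DecidableEq α] [DecidableEq β] [DecidableEq γ]
    (R : Finset (α × β)) (S : Finset (β × γ)) (h ℓ : ℝ) (hh : 0 < h) (hl : 0 < ℓ)
    (hR : ∀ a ∈ R.image Prod.fst, h ≤ ((R.filter (fun p => p.1 = a)).card : ℝ))
    (hS : ∀ b ∈ S.image Prod.fst, ((S.filter (fun p => p.1 = b)).card : ℝ) ≤ ℓ) :
    ((((R ×ˢ S).filter (fun p => p.1.2 = p.2.1)).image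
        (fun p => (p.1.1, p.2.2))).card : ℝ) ≤
      min ((R.card : ℝ) * ℓ) ((S.card : ℝ) * ((R.card : ℝ) / h)) := by
  change (#(relComp R S) : ℝ) ≤ _
  refine le_min (card_relComp_le_card_mul R S hl.le hS) ?_
  calc (#(relComp R S) : ℝ) ≤ #(R.image Prod.fst) * #S := by
        exact_mod_cast card_relComp_le_card_image_fst_mul R S
    _ ≤ #R / h * #S := by gcongr; exact card_image_le_card_div R Prod.fst hh hR
    _ = #S * (#R / h) := mul_comm _ _
end

section
/- Let D be a database consisting of three finite binary relations R ⊆ A×B, S ⊆ B×C, T ⊆ C×A, and let |D| = |R| + |S| + |T|. Then the number of triangles, i.e. the number of triples (a,b,c) with (a,b) ∈ R, (b,c) ∈ S, (c,a) ∈ T, is at most |D|^{3/2}. -/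
/-!
Split the triangles `(a, b, c)` by the degree `d(b)` of `b` in `S` against `k = ⌊√n⌋`, where
`n = |R| + |S| + |T|`. A light triangle (`d(b) ≤ k`) is fixed by its edge `(a, b) ∈ R` and one of
the at most `k` edges of `S` leaving `b`: at most `|R| k` of them. A heavy triangle is fixed by its
edge `(c, a) ∈ T` and the heavy vertex `b`, and there are at most `|S| / (k + 1) < k + 1` heavy
vertices: at most `|T| k` of them. Altogether the count is at most `n k ≤ n √n`.
-/

open Finset

theorem Finset.mul_card_large_fibers_le_card {ι κ : Type*} [DecidableEq κ]
    (s : Finset ι) (f : ι → κ) (k : ℕ) :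
    k * #{y ∈ s.image f | k ≤ #{x ∈ s | f x = y}} ≤ #s := by
  rw [card_eq_sum_card_fiberwise (f := f) (t := s.image f) fun x hx => mem_image_of_mem f hx,
    mul_comm, ← smul_eq_mul]
  calc #{y ∈ s.image f | k ≤ #{x ∈ s | f x = y}} • k
      ≤ ∑ y ∈ s.image f with k ≤ #{x ∈ s | f x = y}, #{x ∈ s | f x = y} :=
        card_nsmul_le_sum _ _ _ fun y hy => (mem_filter.1 hy).2
    _ ≤ ∑ y ∈ s.image f, #{x ∈ s | f x = y} := sum_le_sum_of_subset (filter_subset _ _)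

namespace Triangle

section Degree

variable {β γ : Type*} [DecidableEq β]

def degree (S : Finset (β × γ)) (b : β) : ℕ := #{e ∈ S | e.1 = b}

def heavy (S : Finset (β × γ)) (k : ℕ) : Finset β := {b ∈ S.image Prod.fst | k < degree S b}

variable (S : Finset (β × γ))

theorem succ_mul_card_heavy_le (k : ℕ) : (k + 1) * #(heavy S k) ≤ #S :=
  S.mul_card_large_fibers_le_card Prod.fst (k + 1)

theorem card_heavy_sqrt_le {n : ℕ} (hS : #S ≤ n) : #(heavy S n.sqrt) ≤ n.sqrt :=
  Nat.lt_succ_iff.1 <| Nat.lt_of_mul_lt_mul_left <|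
    (succ_mul_card_heavy_le S n.sqrt).trans_lt (hS.trans_lt (Nat.lt_succ_sqrt n))

end Degree

variable {α β γ : Type*} [DecidableEq α] [DecidableEq β] [DecidableEq γ]

def triangles (R : Finset (α × β)) (S : Finset (β × γ)) (T : Finset (γ × α)) :
    Finset ((α × β) × (β × γ) × (γ × α)) :=
  (R ×ˢ S ×ˢ T).filter (fun p => p.1.2 = p.2.1.1 ∧ p.2.1.2 = p.2.2.1 ∧ p.2.2.2 = p.1.1)

variable {R : Finset (α × β)} {S : Finset (β × γ)} {T : Finset (γ × α)}

theorem mem_triangles {p : (α × β) × (β × γ) × (γ × α)} :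
    p ∈ triangles R S T ↔
      ∃ a b c, p = ((a, b), (b, c), (c, a)) ∧ (a, b) ∈ R ∧ (b, c) ∈ S ∧ (c, a) ∈ T := by
  obtain ⟨⟨a, b⟩, ⟨b', c⟩, ⟨c', a'⟩⟩ := p
  simp only [triangles, mem_filter, mem_product]
  constructor
  · rintro ⟨⟨hR, hS, hT⟩, rfl, rfl, rfl⟩
    exact ⟨_, _, _, rfl, hR, hS, hT⟩
  · rintro ⟨x, y, z, h, hR, hS, hT⟩
    simp only [Prod.mk.injEq] at h
    obtain ⟨⟨rfl, rfl⟩, ⟨rfl, rfl⟩, ⟨rfl, rfl⟩⟩ := h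
    exact ⟨⟨hR, hS, hT⟩, rfl, rfl, rfl⟩

variable (R S T)

theorem card_light_triangles_le (k : ℕ) :
    #{p ∈ triangles R S T | degree S p.1.2 ≤ k} ≤ #R * k := by
  calc _ ≤ k * #{r ∈ R | degree S r.2 ≤ k} := by
        refine card_le_mul_card_image_of_maps_to (f := Prod.fst) ?_ k ?_
        · intro p hp
          obtain ⟨htri, hlight⟩ := mem_filter.1 hp
          obtain ⟨a, b, c, rfl, hR, -⟩ := mem_triangles.1 htri
          exact mem_filter.2 ⟨hR, hlight⟩
        · rintro ⟨a, b⟩ hab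
          calc _ ≤ #(({e ∈ S | e.1 = b}).image fun e => ((a, b), e, (e.2, a))) := by
                refine card_le_card fun p hp => ?_
                obtain ⟨⟨htri, -⟩, hr⟩ := by simpa only [mem_filter] using hp
                obtain ⟨a', b', c, rfl, -, hS, -⟩ := mem_triangles.1 htri
                obtain ⟨rfl, rfl⟩ := Prod.mk.inj hr
                exact mem_image.2 ⟨(b', c), mem_filter.2 ⟨hS, rfl⟩, rfl⟩
            _ ≤ degree S b := card_image_le
            _ ≤ k := (mem_filter.1 hab).2
    _ ≤ #R * k := by
        rw [mul_comm]
        exact Nat.mul_le_mul_right k (card_filter_le _ _)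

theorem card_heavy_triangles_le (k : ℕ) :
    #{p ∈ triangles R S T | ¬degree S p.1.2 ≤ k} ≤ #T * #(heavy S k) := by
  rw [mul_comm]
  refine card_le_mul_card_image_of_maps_to (f := fun p => p.2.2) ?_ _ ?_
  · intro p hp
    obtain ⟨htri, -⟩ := mem_filter.1 hp
    obtain ⟨a, b, c, rfl, -, -, hT⟩ := mem_triangles.1 htri
    exact hT
  · rintro ⟨c, a⟩ -
    calc _ ≤ #((heavy S k).image fun b => ((a, b), (b, c), (c, a))) := by
          refine card_le_card fun p hp => ?_
          obtain ⟨⟨htri, hheavy⟩, ht⟩ := by simpa only [mem_filter] using hp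
          obtain ⟨a', b, c', rfl, -, hS, -⟩ := mem_triangles.1 htri
          obtain ⟨rfl, rfl⟩ := Prod.mk.inj ht
          exact mem_image.2 ⟨b, mem_filter.2 ⟨mem_image.2 ⟨_, hS, rfl⟩, not_le.1 hheavy⟩, rfl⟩
      _ ≤ #(heavy S k) := card_image_le

theorem card_triangles_le (k : ℕ) :
    #(triangles R S T) ≤ #R * k + #T * #(heavy S k) := by
  rw [← card_filter_add_card_filter_not (fun p => degree S p.1.2 ≤ k)]
  exact add_le_add (card_light_triangles_le R S T k) (card_heavy_triangles_le R S T k)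

theorem card_triangles_le_mul_sqrt :
    #(triangles R S T) ≤ (#R + #S + #T) * (#R + #S + #T).sqrt := by
  set n := #R + #S + #T
  calc #(triangles R S T) ≤ #R * n.sqrt + #T * #(heavy S n.sqrt) := card_triangles_le R S T _
    _ ≤ #R * n.sqrt + #T * n.sqrt := by gcongr; exact card_heavy_sqrt_le S (by omega)
    _ ≤ n * n.sqrt := by rw [← add_mul]; gcongr; omega

end Triangle

/-- Loomis–Whitney / AGM bound instance: the number of triangles is at most
`(|R| + |S| + |T|)^(3/2)`. -/
theorem triangle_count_le_db_size_pow {α β γ : Type*}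
    [DecidableEq α] [DecidableEq β] [DecidableEq γ]
    (R : Finset (α × β)) (S : Finset (β × γ)) (T : Finset (γ × α)) :
    ((((R ×ˢ S ×ˢ T).filter
        (fun p => p.1.2 = p.2.1.1 ∧ p.2.1.2 = p.2.2.1 ∧ p.2.2.2 = p.1.1)).card : ℝ) ≤
      ((R.card : ℝ) + (S.card : ℝ) + (T.card : ℝ)) ^ ((3 : ℝ) / 2)) := by
  have hcount := Triangle.card_triangles_le_mul_sqrt R S T
  set n := #R + #S + #T
  have hpow : (n : ℝ) ^ ((3 : ℝ) / 2) = n * √n := by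
    rw [show (3 : ℝ) / 2 = 1 + 1 / 2 by norm_num, Real.rpow_add' n.cast_nonneg (by norm_num),
      Real.rpow_one, Real.sqrt_eq_rpow]
  calc (#(Triangle.triangles R S T) : ℝ) ≤ n * n.sqrt := by exact_mod_cast hcount
    _ ≤ n * √n := by gcongr; exact Real.nat_sqrt_le_real_sqrt
    _ = _ := by rw [← hpow, Nat.cast_add, Nat.cast_add]
end
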